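/- arXiv:1903.01540 — 5 statements merged into one kernel-verified Lean document; each statement's English description precedes it below -/
import Mathlib

section
/- Suppose h, g ∈ ℝ^d, H symmetric, λ ≥ 0 satisfy g + Hh + (λL₂/2)h = 0 and H + (λL₂/2)I ⪰ 0. Then the quadratic model value satisfies ⟨g, h⟩ + (1/2)⟨Hh, h⟩ ≤ -(λL₂/4)‖h‖². -/
open Real RealInnerProductSpace

theorem stmt_4 {d : ℕ} (L₂ : ℝ) (hL₂ : 0 < L₂) (g h : EuclideanSpace ℝ (Fin d))
    (H : EuclideanSpace ℝ (Fin d) →L[ℝ] EuclideanSpace ℝ (Fin d))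
    (hsym : ∀ v w, ⟪H v, w⟫ = ⟪v, H w⟫)
    (lam : ℝ) (hlam : 0 ≤ lam)
    (hfo : g + H h + (lam * L₂ / 2) • h = 0)
    (hpsd : ∀ v, 0 ≤ ⟪H v, v⟫ + (lam * L₂ / 2) * ‖v‖ ^ 2) :
    ⟪g, h⟫ + (1 / 2) * ⟪H h, h⟫ ≤ -(lam * L₂ / 4) * ‖h‖ ^ 2 := by
  have h1 : ⟪g + H h + (lam * L₂ / 2) • h, h⟫ = 0 := by rw [hfo, inner_zero_left]
  rw [inner_add_left, inner_add_left, real_inner_smul_left, real_inner_self_eq_norm_sq] at h1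
  have h2 := hpsd h
  nlinarith [h2, h1]
end

section
/- Under the hypotheses of the inexact trust-region step (‖g - ∇F(x)‖ ≤ ε/6, ‖H - ∇²F(x)‖ ≤ √(εL₂)/3, ‖h‖ ≤ √(ε/L₂), g + Hh + (λL₂/2)h = 0, λ ≥ 0), if λ ≤ 2√(ε/L₂), then ‖∇F(x) + ∇²F(x)h‖ ≤ 2.5ε. -/
open Real RealInnerProductSpace

theorem stmt_6 {d : ℕ} (F : EuclideanSpace ℝ (Fin d) → ℝ) (ε L₂ : ℝ)
    (hε : 0 < ε) (hL₂ : 0 < L₂) (hF : ContDiff ℝ 2 F)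
    (x g h : EuclideanSpace ℝ (Fin d))
    (H : EuclideanSpace ℝ (Fin d) →L[ℝ] EuclideanSpace ℝ (Fin d))
    (hg : ‖g - gradient F x‖ ≤ ε / 6)
    (hH : ‖H - fderiv ℝ (gradient F) x‖ ≤ Real.sqrt (ε * L₂) / 3)
    (hh : ‖h‖ ≤ Real.sqrt (ε / L₂))
    (lam : ℝ) (hlam : 0 ≤ lam)
    (hfo : g + H h + (lam * L₂ / 2) • h = 0)
    (hlam2 : lam ≤ 2 * Real.sqrt (ε / L₂)) :
    ‖gradient F x + (fderiv ℝ (gradient F) x) h‖ ≤ 2.5 * ε := by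
  set G := gradient F x
  set D := fderiv ℝ (gradient F) x
  have hsq : Real.sqrt (ε * L₂) * Real.sqrt (ε / L₂) = ε := by
    rw [← Real.sqrt_mul (by positivity)]
    rw [show ε * L₂ * (ε / L₂) = ε ^ 2 by field_simp]
    exact Real.sqrt_sq hε.le
  have hsq2 : Real.sqrt (ε / L₂) * Real.sqrt (ε / L₂) = ε / L₂ :=
    Real.mul_self_sqrt (by positivity)
  have hdecomp : G + D h = (G - g) - ((H - D) h) - (lam * L₂ / 2) • h := by
    have : g + H h + (lam * L₂ / 2) • h = 0 := hfo
    simp only [ContinuousLinearMap.sub_apply]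
    have := hfo
    abel_nf
    abel_nf at this
    -- rewrite using hfo
    rw [show (G : EuclideanSpace ℝ (Fin d)) + D h
        = G - g - (H h - D h) - (lam * L₂ / 2) • h + (g + H h + (lam * L₂ / 2) • h) by abel,
      hfo]
    abel
  have h1 : ‖(H - D) h‖ ≤ ε / 3 := by
    calc ‖(H - D) h‖ ≤ ‖H - D‖ * ‖h‖ := (H - D).le_opNorm h
    _ ≤ Real.sqrt (ε * L₂) / 3 * Real.sqrt (ε / L₂) := by
        apply mul_le_mul hH hh (norm_nonneg _) (by positivity)
    _ = ε / 3 := by rw [div_mul_eq_mul_div, hsq]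
  have h2 : ‖(lam * L₂ / 2) • h‖ ≤ ε := by
    rw [norm_smul, Real.norm_eq_abs, abs_of_nonneg (by positivity)]
    calc lam * L₂ / 2 * ‖h‖ ≤ (2 * Real.sqrt (ε / L₂)) * L₂ / 2 * Real.sqrt (ε / L₂) := by
          apply mul_le_mul _ hh (norm_nonneg _) (by positivity)
          have := hlam2
          nlinarith
    _ = Real.sqrt (ε / L₂) * Real.sqrt (ε / L₂) * L₂ := by ring
    _ = ε := by rw [hsq2]; field_simp
  have hg' : ‖G - g‖ ≤ ε / 6 := by rwa [norm_sub_rev] at hg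
  calc ‖G + D h‖ = ‖(G - g) - ((H - D) h) - (lam * L₂ / 2) • h‖ := by rw [hdecomp]
  _ ≤ ‖(G - g) - ((H - D) h)‖ + ‖(lam * L₂ / 2) • h‖ := norm_sub_le _ _
  _ ≤ (‖G - g‖ + ‖(H - D) h‖) + ‖(lam * L₂ / 2) • h‖ := by
      gcongr; exact norm_sub_le _ _
  _ ≤ (ε / 6 + ε / 3) + ε := by gcongr
  _ ≤ 2.5 * ε := by linarith
end

section
/- Let F have L₂-Lipschitz Hessian, and suppose x, h, g, H, λ satisfy ‖g - ∇F(x)‖ ≤ ε/6, ‖H - ∇²F(x)‖ ≤ √(εL₂)/3, ‖h‖ ≤ √(ε/L₂), g + Hh + (λL₂/2)h = 0, H + (λL₂/2)I ⪰ 0, and λ ≤ 2√(ε/L₂). Then ‖∇F(x + h)‖ ≤ 3ε. -/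
/-!
Using the first-order condition `g + H h + (λ L₂ / 2) h = 0`, split
`∇F(x + h) = [∇F(x + h) - ∇F(x) - ∇²F(x) h] + [∇F(x) - g] + [∇²F(x) - H] h - (λ L₂ / 2) h`.
The Lipschitz Hessian bounds the Taylor remainder by `L₂ ‖h‖² ≤ ε`, and since
`‖h‖ ≤ √(ε / L₂)` the other three terms are at most `ε / 6`, `ε / 3` and `ε`.
-/

open Real RealInnerProductSpace

theorem ContDiff.gradient {E : Type*} [NormedAddCommGroup E] [InnerProductSpace ℝ E]
    [CompleteSpace E] {f : E → ℝ} {n : WithTop ℕ∞} (hf : ContDiff ℝ (n + 1) f) :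
    ContDiff ℝ n (gradient f) :=
  (InnerProductSpace.toDual ℝ E).symm.contDiff.comp (hf.fderiv_right le_rfl)

theorem norm_sub_sub_fderiv_apply_le_of_lipschitz_fderiv {E F : Type*}
    [NormedAddCommGroup E] [NormedSpace ℝ E] [NormedAddCommGroup F] [NormedSpace ℝ F]
    {f : E → F} {L : ℝ} (hL : 0 ≤ L) {x h : E}
    (hf : ∀ y ∈ Metric.closedBall x ‖h‖, DifferentiableAt ℝ f y)
    (hf' : ∀ y ∈ Metric.closedBall x ‖h‖, ‖fderiv ℝ f y - fderiv ℝ f x‖ ≤ L * ‖y - x‖) :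
    ‖f (x + h) - f x - fderiv ℝ f x h‖ ≤ L * ‖h‖ ^ 2 := by
  have hball : ∀ y ∈ Metric.closedBall x ‖h‖, ‖fderiv ℝ f y - fderiv ℝ f x‖ ≤ L * ‖h‖ :=
    fun y hy => (hf' y hy).trans (mul_le_mul_of_nonneg_left (mem_closedBall_iff_norm.mp hy) hL)
  have hmvt := (convex_closedBall x ‖h‖).norm_image_sub_le_of_norm_fderiv_le' hf hball
    (Metric.mem_closedBall_self (norm_nonneg h)) (y := x + h) (by simp)
  simpa [sq, mul_assoc] using hmvt

theorem norm_le_of_add_apply_add_smul_eq_zero {E : Type*} [NormedAddCommGroup E]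
    [NormedSpace ℝ E] {G₀ G₁ g h : E} {A H : E →L[ℝ] E} {c : ℝ}
    (hfo : g + H h + c • h = 0) :
    ‖G₁‖ ≤ ‖G₁ - G₀ - A h‖ + ‖G₀ - g‖ + ‖A - H‖ * ‖h‖ + |c| * ‖h‖ := by
  have hsplit : G₁ = (G₁ - G₀ - A h) + (G₀ - g) + (A - H) h - c • h := by
    rw [sub_apply, eq_sub_iff_add_eq, ← sub_eq_zero, ← hfo]
    abel
  calc ‖G₁‖ = ‖(G₁ - G₀ - A h) + (G₀ - g) + (A - H) h - c • h‖ := congrArg norm hsplit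
    _ ≤ ‖G₁ - G₀ - A h‖ + ‖G₀ - g‖ + ‖(A - H) h‖ + ‖c • h‖ := by
        grw [norm_sub_le, norm_add_le, norm_add_le]
    _ ≤ _ := by
        rw [norm_smul, Real.norm_eq_abs]
        gcongr
        exact (A - H).le_opNorm h

theorem sqrt_mul_mul_sqrt_div {a b : ℝ} (ha : 0 ≤ a) (hb : 0 < b) :
    √(a * b) * √(a / b) = a := by
  rw [← Real.sqrt_mul (by positivity), show a * b * (a / b) = a ^ 2 by field_simp]
  exact Real.sqrt_sq ha

theorem mul_sq_sqrt_div {a b : ℝ} (ha : 0 ≤ a) (hb : 0 < b) : b * √(a / b) ^ 2 = a := by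
  rw [Real.sq_sqrt (by positivity)]
  field_simp

theorem stmt_7_general {d : ℕ} (F : EuclideanSpace ℝ (Fin d) → ℝ) (ε L₂ : ℝ)
    (hε : 0 < ε) (hL₂ : 0 < L₂) (hF : ContDiff ℝ 2 F)
    (hLip : ∀ x y : EuclideanSpace ℝ (Fin d),
      ‖fderiv ℝ (gradient F) x - fderiv ℝ (gradient F) y‖ ≤ L₂ * ‖x - y‖)
    (x g h : EuclideanSpace ℝ (Fin d))
    (H : EuclideanSpace ℝ (Fin d) →L[ℝ] EuclideanSpace ℝ (Fin d))
    (hg : ‖g - gradient F x‖ ≤ ε / 6)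
    (hH : ‖H - fderiv ℝ (gradient F) x‖ ≤ Real.sqrt (ε * L₂) / 3)
    (hh : ‖h‖ ≤ Real.sqrt (ε / L₂))
    (lam : ℝ) (hlam : 0 ≤ lam)
    (hfo : g + H h + (lam * L₂ / 2) • h = 0)
    (hlam2 : lam ≤ 2 * Real.sqrt (ε / L₂)) :
    ‖gradient F (x + h)‖ ≤ 3 * ε := by
  have hdiff : Differentiable ℝ (gradient F) := (hF.gradient (n := 1)).differentiable one_ne_zero
  have htaylor := norm_sub_sub_fderiv_apply_le_of_lipschitz_fderiv hL₂.le
    (fun y _ => hdiff y) (fun y _ => hLip y x) (h := h)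
  have hsplit := norm_le_of_add_apply_add_smul_eq_zero (G₀ := gradient F x)
    (G₁ := gradient F (x + h)) (A := fderiv ℝ (gradient F) x) hfo
  rw [norm_sub_rev] at hg hH
  rw [abs_of_nonneg (by positivity)] at hsplit
  have hs := mul_sq_sqrt_div hε.le hL₂
  have hst := sqrt_mul_mul_sqrt_div hε.le hL₂
  have hh₀ := norm_nonneg h
  have hsq : ‖h‖ ^ 2 ≤ √(ε / L₂) ^ 2 := pow_le_pow_left₀ hh₀ hh 2
  have hlh : lam * ‖h‖ ≤ 2 * √(ε / L₂) * √(ε / L₂) := mul_le_mul hlam2 hh hh₀ (by positivity)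
  have hHh : ‖fderiv ℝ (gradient F) x - H‖ * ‖h‖ ≤ √(ε * L₂) / 3 * √(ε / L₂) :=
    mul_le_mul hH hh hh₀ (by positivity)
  nlinarith

theorem stmt_7 {d : ℕ} (F : EuclideanSpace ℝ (Fin d) → ℝ) (ε L₂ : ℝ)
    (hε : 0 < ε) (hL₂ : 0 < L₂) (hF : ContDiff ℝ 2 F)
    (hLip : ∀ x y : EuclideanSpace ℝ (Fin d),
      ‖fderiv ℝ (gradient F) x - fderiv ℝ (gradient F) y‖ ≤ L₂ * ‖x - y‖)
    (x g h : EuclideanSpace ℝ (Fin d))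
    (H : EuclideanSpace ℝ (Fin d) →L[ℝ] EuclideanSpace ℝ (Fin d))
    (hg : ‖g - gradient F x‖ ≤ ε / 6)
    (hH : ‖H - fderiv ℝ (gradient F) x‖ ≤ Real.sqrt (ε * L₂) / 3)
    (hh : ‖h‖ ≤ Real.sqrt (ε / L₂))
    (lam : ℝ) (hlam : 0 ≤ lam)
    (hfo : g + H h + (lam * L₂ / 2) • h = 0)
    (hpsd : ∀ v, 0 ≤ ⟪H v, v⟫ + (lam * L₂ / 2) * ‖v‖ ^ 2)
    (hlam2 : lam ≤ 2 * Real.sqrt (ε / L₂)) :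
    ‖gradient F (x + h)‖ ≤ 3 * ε :=
  stmt_7_general F ε L₂ hε hL₂ hF hLip x g h H hg hH hh lam hlam hfo hlam2
end

section
/- Let F have L₂-Lipschitz Hessian, and suppose x, h, H, λ satisfy ‖H - ∇²F(x)‖ ≤ √(εL₂)/3, ‖h‖ ≤ √(ε/L₂), H + (λL₂/2)I ⪰ 0, and 0 ≤ λ ≤ 2√(ε/L₂). Then ∇²F(x + h) ⪰ -(10/3)√(L₂ε)·I. -/
open Real RealInnerProductSpace

theorem stmt_8 {d : ℕ} (F : EuclideanSpace ℝ (Fin d) → ℝ) (ε L₂ : ℝ)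
    (hε : 0 < ε) (hL₂ : 0 < L₂) (hF : ContDiff ℝ 2 F)
    (hLip : ∀ x y : EuclideanSpace ℝ (Fin d),
      ‖fderiv ℝ (gradient F) x - fderiv ℝ (gradient F) y‖ ≤ L₂ * ‖x - y‖)
    (x h : EuclideanSpace ℝ (Fin d))
    (H : EuclideanSpace ℝ (Fin d) →L[ℝ] EuclideanSpace ℝ (Fin d))
    (hH : ‖H - fderiv ℝ (gradient F) x‖ ≤ Real.sqrt (ε * L₂) / 3)
    (hh : ‖h‖ ≤ Real.sqrt (ε / L₂))
    (lam : ℝ) (hlam : 0 ≤ lam)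
    (hpsd : ∀ v, 0 ≤ ⟪H v, v⟫ + (lam * L₂ / 2) * ‖v‖ ^ 2)
    (hlam2 : lam ≤ 2 * Real.sqrt (ε / L₂)) :
    ∀ v : EuclideanSpace ℝ (Fin d),
      ⟪(fderiv ℝ (gradient F) (x + h)) v, v⟫ ≥ -((10 / 3) * Real.sqrt (L₂ * ε) * ‖v‖ ^ 2) := by
  intro v
  set A := fderiv ℝ (gradient F) (x + h) with hA
  set B := fderiv ℝ (gradient F) x with hB
  have key : ∀ (T : EuclideanSpace ℝ (Fin d) →L[ℝ] EuclideanSpace ℝ (Fin d)),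
      |⟪T v, v⟫| ≤ ‖T‖ * ‖v‖ ^ 2 := by
    intro T
    calc |⟪T v, v⟫| ≤ ‖T v‖ * ‖v‖ := abs_real_inner_le_norm _ _
      _ ≤ ‖T‖ * ‖v‖ * ‖v‖ := mul_le_mul_of_nonneg_right (T.le_opNorm v) (norm_nonneg v)
      _ = ‖T‖ * ‖v‖ ^ 2 := by ring
  have h1 : ‖A - B‖ ≤ L₂ * ‖h‖ := by
    have := hLip (x + h) x
    rwa [add_sub_cancel_left] at this
  have e1 : L₂ * Real.sqrt (ε / L₂) = Real.sqrt (ε * L₂) := by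
    rw [Real.sqrt_div hε.le, Real.sqrt_mul hε.le]
    have hs : Real.sqrt L₂ * Real.sqrt L₂ = L₂ := Real.mul_self_sqrt hL₂.le
    have hspos : 0 < Real.sqrt L₂ := Real.sqrt_pos.mpr hL₂
    field_simp
    nlinarith [Real.sqrt_nonneg ε]
  have e2 : Real.sqrt (L₂ * ε) = Real.sqrt (ε * L₂) := by rw [mul_comm]
  have hAB : ‖A - B‖ ≤ Real.sqrt (ε * L₂) := by
    calc ‖A - B‖ ≤ L₂ * ‖h‖ := h1
      _ ≤ L₂ * Real.sqrt (ε / L₂) := by gcongr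
      _ = Real.sqrt (ε * L₂) := e1
  have hlam3 : lam * L₂ / 2 ≤ Real.sqrt (ε * L₂) := by
    calc lam * L₂ / 2 ≤ (2 * Real.sqrt (ε / L₂)) * L₂ / 2 := by gcongr
      _ = L₂ * Real.sqrt (ε / L₂) := by ring
      _ = Real.sqrt (ε * L₂) := e1
  have d1 : ⟪A v, v⟫ - ⟪B v, v⟫ = ⟪(A - B) v, v⟫ := by
    simp [ContinuousLinearMap.sub_apply, inner_sub_left]
  have d2 : ⟪H v, v⟫ - ⟪B v, v⟫ = ⟪(H - B) v, v⟫ := by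
    simp [ContinuousLinearMap.sub_apply, inner_sub_left]
  have k1 := key (A - B)
  have k2 := key (H - B)
  have hnv : (0:ℝ) ≤ ‖v‖ ^ 2 := by positivity
  have b1 : |⟪(A - B) v, v⟫| ≤ Real.sqrt (ε * L₂) * ‖v‖ ^ 2 :=
    k1.trans (by gcongr)
  have b2 : |⟪(H - B) v, v⟫| ≤ (Real.sqrt (ε * L₂) / 3) * ‖v‖ ^ 2 :=
    k2.trans (by gcongr)
  have hb1 := abs_le.mp b1
  have hb2 := abs_le.mp b2
  have hp := hpsd v
  have hl3 : lam * L₂ / 2 * ‖v‖ ^ 2 ≤ Real.sqrt (ε * L₂) * ‖v‖ ^ 2 := by gcongr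
  rw [ge_iff_le, e2]
  nlinarith [hb1.1, hb2.2, hp, hl3, d1, d2]
end

section
/- Let g ∈ ℝ^d, H a symmetric d×d matrix, r > 0, and let h* be a global minimizer of m(h) = ⟨g, h⟩ + (1/2)⟨Hh, h⟩ over the ball {h : ‖h‖ ≤ r}. Then there exists λ ≥ 0 such that (H + λI)h* = -g, H + λI is positive semidefinite, and λ(‖h*‖ - r) = 0. -/
/-!
At a minimizer `x` of the model `m` over the ball, the first-order condition
`⟪g + H x, w - x⟫ ≥ 0` for all `w` in the ball says that `-(g + H x)` lies in the normal cone of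
the ball at `x`. Testing it against the boundary point opposite to `g + H x` and using the equality
case of Cauchy–Schwarz gives `g + H x = -λ x` with `λ = ‖g + H x‖ / r ≥ 0`, and `λ = 0` unless `x`
lies on the sphere. With this `λ`, for every `w` on the sphere
`2 (m w - m x) = ⟪(H + λ) (w - x), w - x⟫`, so this quadratic form is nonnegative on all such
differences. By homogeneity it is nonnegative on every direction along which the line through `x`
meets the sphere a second time, and by continuity also on the directions tangent to the sphere
at `x`.
-/

open Real RealInnerProductSpace

open Filter Metric Set Topology

section TrustRegion

variable {E : Type*} [NormedAddCommGroup E] [InnerProductSpace ℝ E]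

noncomputable def quadraticModel (g : E) (T : E →L[ℝ] E) (h : E) : ℝ :=
  ⟪g, h⟫ + (1 / 2) * ⟪T h, h⟫

lemma quadraticModel_add {g : E} {T : E →L[ℝ] E} (hT : (T : E →ₗ[ℝ] E).IsSymmetric) (x u : E) :
    quadraticModel g T (x + u) =
      quadraticModel g T x + ⟪g + T x, u⟫ + (1 / 2) * ⟪T u, u⟫ := by
  have hTux : ⟪T u, x⟫ = ⟪T x, u⟫ := (hT u x).trans (real_inner_comm _ _)
  simp only [quadraticModel, map_add, inner_add_left, inner_add_right]
  linarith

lemma IsMinOn.inner_add_apply_sub_nonneg {g : E} {T : E →L[ℝ] E}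
    {K : Set E} {x w : E} (hmin : IsMinOn (quadraticModel g T) K x)
    (hT : (T : E →ₗ[ℝ] E).IsSymmetric) (hK : Convex ℝ K) (hx : x ∈ K) (hw : w ∈ K) :
    0 ≤ ⟪g + T x, w - x⟫ := by
  have hsegment : ∀ t ∈ Ioc (0 : ℝ) 1,
      0 ≤ ⟪g + T x, w - x⟫ + t * ((1 / 2) * ⟪T (w - x), w - x⟫) := by
    rintro t ⟨ht0, ht1⟩
    have hle := hmin (hK.add_smul_sub_mem hx hw ⟨ht0.le, ht1⟩)
    rw [mem_ofPred_eq, quadraticModel_add hT, map_smul, real_inner_smul_right,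
      real_inner_smul_left, real_inner_smul_right] at hle
    refine nonneg_of_mul_nonneg_right ?_ ht0
    linarith
  have hlim : Tendsto (fun t : ℝ => ⟪g + T x, w - x⟫ + t * ((1 / 2) * ⟪T (w - x), w - x⟫))
      (𝓝[>] 0) (𝓝 ⟪g + T x, w - x⟫) :=
    ((by fun_prop : Continuous _).tendsto' 0 _ (by simp)).mono_left nhdsWithin_le_nhds
  exact ge_of_tendsto hlim (eventually_of_mem (Ioc_mem_nhdsGT one_pos) hsegment)

lemma exists_nonneg_eq_neg_smul_of_forall_inner_sub_nonneg {p x : E} {r : ℝ} (hr : 0 < r)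
    (hx : ‖x‖ ≤ r) (h : ∀ w, ‖w‖ ≤ r → 0 ≤ ⟪p, w - x⟫) :
    ∃ lam : ℝ, 0 ≤ lam ∧ p = -(lam • x) ∧ lam * (‖x‖ - r) = 0 := by
  rcases eq_or_ne p 0 with rfl | hp
  · exact ⟨0, le_rfl, by simp, by simp⟩
  -- Test against the boundary point opposite to `p`: Cauchy–Schwarz must then be an equality.
  have hp : 0 < ‖p‖ := norm_pos_iff.2 hp
  have hopp := h (-((r / ‖p‖) • p)) (by
    rw [norm_neg, norm_smul, norm_div, norm_norm, Real.norm_of_nonneg hr.le,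
      div_mul_cancel₀ _ hp.ne'])
  rw [inner_sub_right, inner_neg_right, real_inner_smul_right, real_inner_self_eq_norm_sq,
    show r / ‖p‖ * ‖p‖ ^ 2 = r * ‖p‖ by field_simp] at hopp
  have hcs : ⟪-p, x⟫ ≤ ‖-p‖ * ‖x‖ := real_inner_le_norm _ _
  rw [inner_neg_left, norm_neg] at hcs
  have hxr : ‖x‖ = r := le_antisymm hx (le_of_mul_le_mul_left (by linarith) hp)
  rw [hxr] at hcs
  have hpar := inner_eq_norm_mul_iff_real.1 (show ⟪-p, x⟫ = ‖-p‖ * ‖x‖ by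
    rw [inner_neg_left, norm_neg, hxr]; linarith)
  rw [hxr, norm_neg, smul_neg] at hpar
  refine ⟨‖p‖ / r, by positivity, ?_, by rw [hxr]; ring⟩
  rw [div_eq_inv_mul, mul_smul, ← hpar, smul_neg, neg_neg, smul_smul, inv_mul_cancel₀ hr.ne',
    one_smul]

lemma two_mul_quadraticModel_sub_eq {g : E} {T : E →L[ℝ] E} (hT : (T : E →ₗ[ℝ] E).IsSymmetric)
    {x : E} {lam : ℝ} (hgrad : g + T x = -(lam • x)) (w : E) :
    2 * (quadraticModel g T w - quadraticModel g T x) =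
      ⟪T (w - x), w - x⟫ + lam * ‖w - x‖ ^ 2 + lam * (‖x‖ ^ 2 - ‖w‖ ^ 2) := by
  have hw := quadraticModel_add (g := g) hT x (w - x)
  have hnorm := norm_add_sq_real x (w - x)
  rw [add_sub_cancel] at hw hnorm
  rw [hgrad, inner_neg_left, real_inner_smul_left] at hw
  linear_combination 2 * hw + lam * hnorm

lemma exists_pos_norm_add_smul_eq {x v : E} {r : ℝ} (hx : ‖x‖ < r) (hv : v ≠ 0) :
    ∃ t : ℝ, 0 < t ∧ ‖x + t • v‖ = r := by
  have hv : 0 < ‖v‖ := norm_pos_iff.2 hv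
  have hr : 0 < r := (norm_nonneg x).trans_lt hx
  have hfar : r ≤ ‖x + (2 * r / ‖v‖) • v‖ := by
    have := norm_sub_norm_le ((2 * r / ‖v‖) • v) (-x)
    rw [sub_neg_eq_add, add_comm, norm_neg, norm_smul, Real.norm_of_nonneg (by positivity),
      div_mul_cancel₀ _ hv.ne'] at this
    linarith
  obtain ⟨t, ⟨ht0, -⟩, ht⟩ := intermediate_value_Icc (by positivity : (0 : ℝ) ≤ 2 * r / ‖v‖)
    (f := fun t : ℝ => ‖x + t • v‖) (by fun_prop) ⟨by simpa using hx.le, hfar⟩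
  refine ⟨t, ht0.lt_of_ne ?_, ht⟩
  rintro rfl
  simp only [zero_smul, add_zero] at ht
  linarith

lemma exists_ne_zero_norm_add_smul_eq_norm {x v : E} (hxv : ⟪x, v⟫ ≠ 0) :
    ∃ t : ℝ, t ≠ 0 ∧ ‖x + t • v‖ = ‖x‖ := by
  have hv : ‖v‖ ≠ 0 := norm_ne_zero_iff.2 (by rintro rfl; simp at hxv)
  refine ⟨-2 * ⟪x, v⟫ / ‖v‖ ^ 2, by simp [hxv, hv], ?_⟩
  rw [← sq_eq_sq₀ (norm_nonneg _) (norm_nonneg _), norm_add_sq_real, real_inner_smul_right,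
    norm_smul, mul_pow, Real.norm_eq_abs, sq_abs]
  field_simp
  ring

lemma nonneg_of_forall_norm_eq_nonneg_sub {Q : E → ℝ} (hQ : ∀ (t : ℝ) v, Q (t • v) = t ^ 2 * Q v)
    (hQc : Continuous Q) {x : E} {r : ℝ} (hr : 0 < r) (hx : ‖x‖ ≤ r)
    (h : ∀ w, ‖w‖ = r → 0 ≤ Q (w - x)) (v : E) : 0 ≤ Q v := by
  have hsecant : ∀ v (t : ℝ), t ≠ 0 → ‖x + t • v‖ = r → 0 ≤ Q v := by
    intro v t ht hw
    have := h _ hw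
    rw [add_sub_cancel_left, hQ] at this
    exact nonneg_of_mul_nonneg_right this (by positivity)
  rcases hx.lt_or_eq with hlt | heq
  · rcases eq_or_ne v 0 with rfl | hv
    · exact (by simpa using hQ 0 0 : Q 0 = 0).ge
    · obtain ⟨t, ht, hw⟩ := exists_pos_norm_add_smul_eq hlt hv
      exact hsecant v t ht.ne' hw
  have htransversal : ∀ v, ⟪x, v⟫ ≠ 0 → 0 ≤ Q v := fun v hv => by
    obtain ⟨t, ht, hw⟩ := exists_ne_zero_norm_add_smul_eq_norm hv
    exact hsecant v t ht (hw.trans heq)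
  by_cases hv : ⟪x, v⟫ = 0
  · -- A direction tangent to the sphere at `x` is a limit of transversal ones.
    have hlim : Tendsto (fun ε : ℝ => Q (v + ε • x)) (𝓝[>] 0) (𝓝 (Q v)) :=
      ((by fun_prop : Continuous fun ε : ℝ => Q (v + ε • x)).tendsto' 0 _ (by simp)).mono_left
        nhdsWithin_le_nhds
    refine ge_of_tendsto hlim (eventually_nhdsWithin_of_forall fun ε (hε : 0 < ε) => ?_)
    refine htransversal _ ?_
    rw [inner_add_right, hv, real_inner_smul_right, real_inner_self_eq_norm_sq, zero_add, heq]
    positivity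
  · exact htransversal v hv

lemma IsMinOn.inner_apply_add_mul_norm_sq_nonneg {g : E} {T : E →L[ℝ] E}
    {x : E} {r lam : ℝ} (hmin : IsMinOn (quadraticModel g T) (closedBall 0 r) x)
    (hT : (T : E →ₗ[ℝ] E).IsSymmetric) (hr : 0 < r) (hx : ‖x‖ ≤ r) (hgrad : g + T x = -(lam • x))
    (hcompl : lam * (‖x‖ - r) = 0) (v : E) : 0 ≤ ⟪T v, v⟫ + lam * ‖v‖ ^ 2 := by
  refine nonneg_of_forall_norm_eq_nonneg_sub (Q := fun v => ⟪T v, v⟫ + lam * ‖v‖ ^ 2)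
    (fun t v => ?_) (by fun_prop) hr hx (fun w hw => ?_) v
  · simp only [map_smul, real_inner_smul_left, real_inner_smul_right, norm_smul, Real.norm_eq_abs,
      mul_pow, sq_abs]
    ring
  · have hlam : lam * (‖x‖ ^ 2 - ‖w‖ ^ 2) = 0 := by
      rw [hw]; linear_combination (‖x‖ + r) * hcompl
    have hle := hmin (mem_closedBall_zero_iff.2 hw.le)
    have := two_mul_quadraticModel_sub_eq hT hgrad w
    rw [mem_ofPred_eq] at hle
    linarith

end TrustRegion

theorem stmt_19 {d : ℕ} (g : EuclideanSpace ℝ (Fin d))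
    (H : EuclideanSpace ℝ (Fin d) →L[ℝ] EuclideanSpace ℝ (Fin d))
    (hsym : ∀ v w, ⟪H v, w⟫ = ⟪v, H w⟫)
    (r : ℝ) (hr : 0 < r) (hstar : EuclideanSpace ℝ (Fin d)) (hfeas : ‖hstar‖ ≤ r)
    (hmin : ∀ h : EuclideanSpace ℝ (Fin d), ‖h‖ ≤ r →
      ⟪g, hstar⟫ + (1 / 2) * ⟪H hstar, hstar⟫ ≤ ⟪g, h⟫ + (1 / 2) * ⟪H h, h⟫) :
    ∃ lam : ℝ, 0 ≤ lam ∧ H hstar + lam • hstar = -g ∧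
      (∀ v, 0 ≤ ⟪H v, v⟫ + lam * ‖v‖ ^ 2) ∧ lam * (‖hstar‖ - r) = 0 := by
  have hH : (H : EuclideanSpace ℝ (Fin d) →ₗ[ℝ] _).IsSymmetric := hsym
  have hmin' : IsMinOn (quadraticModel g H) (closedBall 0 r) hstar :=
    isMinOn_iff.2 fun h hh => hmin h (mem_closedBall_zero_iff.1 hh)
  obtain ⟨lam, hlam, hgrad, hcompl⟩ :=
    exists_nonneg_eq_neg_smul_of_forall_inner_sub_nonneg hr hfeas fun w hw =>
      hmin'.inner_add_apply_sub_nonneg hH (convex_closedBall 0 r)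
        (mem_closedBall_zero_iff.2 hfeas) (mem_closedBall_zero_iff.2 hw)
  refine ⟨lam, hlam, ?_, hmin'.inner_apply_add_mul_norm_sq_nonneg hH hr hfeas hgrad hcompl,
    hcompl⟩
  rw [eq_neg_iff_add_eq_zero, ← eq_neg_iff_add_eq_zero.1 hgrad]
  abel
end
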